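/- arXiv:1805.07055 — 2 statements merged into one kernel-verified Lean document; each statement's English description precedes it below -/
import Mathlib

section
/- Let (X, ‖·‖ₙ) and (Y, |·|ₙ) be Fréchet spaces, U ⊆ X open, V ⊆ Y open and convex, and F : X ⇉ Y a set-valued map with closed graph. Assume there is κ > 0 such that D′F(x,y)(Πₛ(X)) ⊇ κ·Πₛ(Y) for all (x,y) ∈ (U × V) ∩ graph(F) and all s ∈ ℝ₊^∞. Then F is weakly Π-surjective on (U, V) with constant κ: whenever (x,y) ∈ (U × V) ∩ graph(F) and s ∈ ℝ₊^∞ satisfy x + Πₛ(X) ⊆ U, one has cl F(x + Πₛ(X)) ⊇ {y + κ·Πₛ(Y)} ∩ V. -/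
/-!
Fix `ε > 0`. Call a triple `(t, u, w)` with `0 ≤ t ≤ 1`, `w ∈ F (x + u)`, `u ∈ t Πₛ(X)` and
`ρ(w, y + t v) ≤ ε t` a stage, and let `(t, u, w) ≼ (t', u', w')` mean `t ≤ t'`,
`u' - u ∈ (t' - t) Πₛ(X)` and `ρ(w', w + (t' - t) v) ≤ ε (t' - t)`. Along a chain the stages are
Cauchy as `t` increases to its supremum, so completeness and the closed graph give an upper
bound, and Zorn's lemma a maximal stage. If its parameter `t` were below `1`, the point
`(x + u, w)` would lie in `U × V` (a thin `ρ`-tube around the segment `[y, y + v]` stays in `V`),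
and the contingent variation in the direction `(1 - t) v` would produce a strictly larger stage.
Hence `t = 1`: then `u ∈ Πₛ(X)` and `w ∈ F (x + u)` is `ε`-close to `y + v`.
-/

open Filter Topology Set Pointwise

/-- The standard Fréchet metric built from a countable family of seminorms. -/
noncomputable def frechetRho {X : Type*} [AddCommGroup X] [Module ℝ X]
    (p : ℕ → Seminorm ℝ X) (x y : X) : ℝ :=
  ⨆ n, (2 : ℝ)⁻¹ ^ n * p n (x - y) / (1 + p n (x - y))

/-- `Πₛ(X) = {x : ‖x‖ₙ ≤ sₙ for all n}`. -/
def PiS {X : Type*} [AddCommGroup X] [Module ℝ X] (p : ℕ → Seminorm ℝ X) (s : ℕ → ℝ) :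
    Set X := {x | ∀ n, p n x ≤ s n}

/-- The contingent variation `D′F(x,y)(A)`: `v ∈ D′F(x,y)(A)` iff there are `tₖ ↓ 0`,
`aₖ ∈ A` and `zₖ ∈ F(x + tₖ aₖ)` with `ρ_Y(zₖ, y + tₖ v)/tₖ → 0`. -/
def contVar {X Y : Type*} [AddCommGroup X] [Module ℝ X] [AddCommGroup Y] [Module ℝ Y]
    (q : ℕ → Seminorm ℝ Y) (F : X → Set Y) (x : X) (y : Y) (A : Set X) : Set Y :=
  {v | ∃ (t : ℕ → ℝ) (a : ℕ → X) (z : ℕ → Y),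
    (∀ k, 0 < t k) ∧ Filter.Tendsto t Filter.atTop (nhds 0) ∧ (∀ k, a k ∈ A) ∧
    (∀ k, z k ∈ F (x + t k • a k)) ∧
    Filter.Tendsto (fun k => frechetRho q (z k) (y + t k • v) / t k) Filter.atTop (nhds 0)}

/-- The `ρ`-closure of a set. -/
def rhoClosure {Y : Type*} [AddCommGroup Y] [Module ℝ Y] (q : ℕ → Seminorm ℝ Y)
    (A : Set Y) : Set Y := {y | ∀ ε > (0 : ℝ), ∃ a ∈ A, frechetRho q a y < ε}

/-- Openness with respect to the Fréchet metric `ρ`. -/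
def RhoOpen {X : Type*} [AddCommGroup X] [Module ℝ X] (p : ℕ → Seminorm ℝ X)
    (U : Set X) : Prop := ∀ x ∈ U, ∃ ε > (0 : ℝ), ∀ x', frechetRho p x x' < ε → x' ∈ U

noncomputable def frechetTerm (n : ℕ) (r : ℝ) : ℝ := (2 : ℝ)⁻¹ ^ n * r / (1 + r)

section FrechetTerm

variable (n : ℕ) {a b r : ℝ}

lemma frechetTerm_nonneg (hr : 0 ≤ r) : 0 ≤ frechetTerm n r := by
  unfold frechetTerm; positivity

lemma frechetTerm_pos (hr : 0 < r) : 0 < frechetTerm n r := by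
  unfold frechetTerm; positivity

lemma frechetTerm_le_pow (hr : 0 ≤ r) : frechetTerm n r ≤ (2 : ℝ)⁻¹ ^ n := by
  unfold frechetTerm
  rw [div_le_iff₀ (by linarith)]
  nlinarith [pow_nonneg (by norm_num : (0 : ℝ) ≤ 2⁻¹) n]

lemma frechetTerm_le_self (hr : 0 ≤ r) : frechetTerm n r ≤ r := by
  unfold frechetTerm
  rw [div_le_iff₀ (by linarith)]
  nlinarith [pow_le_one₀ (by norm_num : (0 : ℝ) ≤ 2⁻¹) (by norm_num : (2 : ℝ)⁻¹ ≤ 1) (n := n),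
    pow_nonneg (by norm_num : (0 : ℝ) ≤ 2⁻¹) n]

lemma frechetTerm_mono (ha : 0 ≤ a) (hab : a ≤ b) : frechetTerm n a ≤ frechetTerm n b := by
  unfold frechetTerm
  rw [div_le_div_iff₀ (by linarith) (by linarith)]
  nlinarith [pow_nonneg (by norm_num : (0 : ℝ) ≤ 2⁻¹) n]

lemma frechetTerm_add_le (ha : 0 ≤ a) (hb : 0 ≤ b) :
    frechetTerm n (a + b) ≤ frechetTerm n a + frechetTerm n b := by
  unfold frechetTerm
  rw [div_add_div _ _ (by linarith) (by linarith), div_le_div_iff₀ (by linarith) (by positivity)]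
  have hc : (0 : ℝ) ≤ (2 : ℝ)⁻¹ ^ n := pow_nonneg (by norm_num) n
  nlinarith [mul_nonneg (mul_nonneg hc (mul_nonneg ha hb)) (show (0 : ℝ) ≤ 2 + a + b by linarith)]

end FrechetTerm

section FrechetRho

variable {Z : Type*} [AddCommGroup Z] [Module ℝ Z] (q : ℕ → Seminorm ℝ Z)

lemma frechetRho_eq_iSup (a b : Z) : frechetRho q a b = ⨆ n, frechetTerm n (q n (a - b)) := rfl

lemma frechetTerm_le_frechetRho (a b : Z) (n : ℕ) :
    frechetTerm n (q n (a - b)) ≤ frechetRho q a b :=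
  le_ciSup (f := fun n => frechetTerm n (q n (a - b))) ⟨1, by
    rintro _ ⟨m, rfl⟩
    exact (frechetTerm_le_pow m (apply_nonneg (q m) (a - b))).trans
      (pow_le_one₀ (by norm_num) (by norm_num))⟩ n

lemma frechetRho_le {a b : Z} {C : ℝ} (h : ∀ n, frechetTerm n (q n (a - b)) ≤ C) :
    frechetRho q a b ≤ C :=
  ciSup_le h

lemma frechetRho_nonneg (a b : Z) : 0 ≤ frechetRho q a b :=
  Real.iSup_nonneg fun n => frechetTerm_nonneg n (apply_nonneg _ _)

lemma frechetRho_congr {a b a' b' : Z} (h : a - b = a' - b') :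
    frechetRho q a b = frechetRho q a' b' := by
  rw [frechetRho_eq_iSup, frechetRho_eq_iSup, h]

lemma frechetRho_comm (a b : Z) : frechetRho q a b = frechetRho q b a := by
  simp only [frechetRho_eq_iSup, map_sub_rev]

lemma frechetRho_self (a : Z) : frechetRho q a a = 0 := by
  simp [frechetRho_eq_iSup, frechetTerm]

lemma frechetRho_triangle (a b c : Z) :
    frechetRho q a c ≤ frechetRho q a b + frechetRho q b c := by
  refine frechetRho_le q fun n => ?_
  calc frechetTerm n (q n (a - c))
      ≤ frechetTerm n (q n (a - b) + q n (b - c)) :=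
        frechetTerm_mono n (apply_nonneg _ _) (by simpa using map_add_le_add (q n) (a - b) (b - c))
    _ ≤ frechetTerm n (q n (a - b)) + frechetTerm n (q n (b - c)) :=
        frechetTerm_add_le n (apply_nonneg _ _) (apply_nonneg _ _)
    _ ≤ frechetRho q a b + frechetRho q b c :=
        add_le_add (frechetTerm_le_frechetRho q a b n) (frechetTerm_le_frechetRho q b c n)

variable {α : Type*} {l : Filter α} {f g : α → Z}

lemma tendsto_seminorm_of_tendsto_frechetRho
    (h : Tendsto (fun a => frechetRho q (f a) (g a)) l (𝓝 0)) (n : ℕ) :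
    Tendsto (fun a => q n (f a - g a)) l (𝓝 0) := by
  refine tendsto_order.2 ⟨fun γ hγ => Eventually.of_forall fun a => hγ.trans_le (apply_nonneg _ _),
    fun γ hγ => ?_⟩
  filter_upwards [h.eventually_lt_const (frechetTerm_pos n hγ)] with a ha
  by_contra! hle
  exact ((frechetTerm_mono n hγ.le hle).trans (frechetTerm_le_frechetRho q _ _ n)).not_gt ha

/-- The tail of the series defining `ρ` is uniformly small, which leaves finitely many
seminorms to control. -/
lemma tendsto_frechetRho_of_seminorm_le (c : ℕ → ℝ) {t : α → ℝ} (ht : Tendsto t l (𝓝 0))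
    (hfg : ∀ a n, q n (f a - g a) ≤ |t a| * c n) :
    Tendsto (fun a => frechetRho q (f a) (g a)) l (𝓝 0) := by
  refine Metric.tendsto_nhds.2 fun η hη => ?_
  obtain ⟨N, hN⟩ : ∃ N : ℕ, (2 : ℝ)⁻¹ ^ N < η / 2 :=
    exists_pow_lt_of_lt_one (by positivity) (by norm_num)
  have hsmall : ∀ n, Tendsto (fun a => |t a| * c n) l (𝓝 0) := fun n => by
    simpa using ht.abs.mul_const (c n)
  filter_upwards [(Finset.range (N + 1)).eventually_all.2
    fun n _ => (hsmall n).eventually_lt_const (half_pos hη)] with a ha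
  rw [Real.dist_eq, sub_zero, abs_of_nonneg (frechetRho_nonneg q _ _)]
  refine (frechetRho_le q fun n => ?_).trans_lt (half_lt_self hη)
  rcases le_or_gt n N with hn | hn
  · exact (frechetTerm_le_self n (apply_nonneg _ _)).trans
      ((hfg a n).trans (ha n (Finset.mem_range.2 (by omega))).le)
  · calc frechetTerm n (q n (f a - g a)) ≤ (2 : ℝ)⁻¹ ^ n := frechetTerm_le_pow n (apply_nonneg _ _)
      _ ≤ (2 : ℝ)⁻¹ ^ N := pow_le_pow_of_le_one (by norm_num) (by norm_num) hn.le
      _ ≤ η / 2 := hN.le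

lemma tendsto_frechetRho_smul (v : Z) :
    Tendsto (fun r : ℝ => frechetRho q (r • v) 0) (𝓝 0) (𝓝 0) :=
  tendsto_frechetRho_of_seminorm_le q (fun n => q n v) tendsto_id fun r n => by
    simp [map_smul_eq_mul]

end FrechetRho

section Segment

variable {Z : Type*} [AddCommGroup Z] [Module ℝ Z] {q : ℕ → Seminorm ℝ Z}

/-- The sets of parameters admitting the radius `1/(k+1)` have interiors exhausting the compact
interval `[0, 1]`. -/
lemma RhoOpen.exists_tube_subset {V : Set Z} (hV : RhoOpen q V) {y v : Z}
    (hseg : ∀ μ ∈ Icc (0 : ℝ) 1, y + μ • v ∈ V) :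
    ∃ r > 0, ∀ μ ∈ Icc (0 : ℝ) 1, ∀ z, frechetRho q z (y + μ • v) < r → z ∈ V := by
  let A : ℕ → Set ℝ := fun k =>
    interior {μ | ∀ z, frechetRho q z (y + μ • v) < 1 / (k + 1) → z ∈ V}
  have hA : Monotone A := fun k k' hk => interior_mono fun μ hμ z hz =>
    hμ z (hz.trans_le (one_div_le_one_div_of_le (by positivity) (by simpa using hk)))
  have hcover : Icc (0 : ℝ) 1 ⊆ ⋃ k, A k := by
    intro μ hμ
    obtain ⟨r, hr, hrV⟩ := hV _ (hseg μ hμ)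
    obtain ⟨k, hk⟩ := exists_nat_one_div_lt (half_pos hr)
    have hnear : ∀ᶠ μ' in 𝓝 μ, frechetRho q ((μ' - μ) • v) 0 < r / 2 :=
      ((tendsto_frechetRho_smul q v).comp
        (tendsto_sub_nhds_zero_iff.2 tendsto_id)).eventually_lt_const (half_pos hr)
    refine mem_iUnion.2 ⟨k, mem_interior_iff_mem_nhds.2 (hnear.mono fun μ' hμ' z hz => hrV z ?_)⟩
    have hshift : frechetRho q (y + μ • v) (y + μ' • v) = frechetRho q ((μ' - μ) • v) 0 := by
      rw [frechetRho_comm]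
      exact frechetRho_congr q (by module)
    calc frechetRho q (y + μ • v) z
        ≤ frechetRho q (y + μ • v) (y + μ' • v) + frechetRho q (y + μ' • v) z :=
          frechetRho_triangle q _ _ _
      _ = frechetRho q ((μ' - μ) • v) 0 + frechetRho q z (y + μ' • v) := by
          rw [hshift, frechetRho_comm q _ z]
      _ < r / 2 + r / 2 := add_lt_add hμ' (hz.trans hk)
      _ = r := add_halves r
  obtain ⟨k, hk⟩ := isCompact_Icc.elim_directed_cover A (fun _ => isOpen_interior) hcover
    hA.directed_le
  exact ⟨1 / (k + 1), by positivity, fun μ hμ => interior_subset (hk hμ)⟩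

end Segment

lemma smul_mem_PiS {Z : Type*} [AddCommGroup Z] [Module ℝ Z] {q : ℕ → Seminorm ℝ Z} {s : ℕ → ℝ}
    {c : ℝ} (hc : 0 ≤ c) {v : Z} (hv : v ∈ PiS q s) : c • v ∈ PiS q fun n => c * s n := fun n => by
  rw [map_smul_eq_mul, Real.norm_eq_abs, abs_of_nonneg hc]
  exact mul_le_mul_of_nonneg_left (hv n) hc

def RhoComplete {Z : Type*} [AddCommGroup Z] [Module ℝ Z] (q : ℕ → Seminorm ℝ Z) : Prop :=
  ∀ u : ℕ → Z, (∀ ε > (0 : ℝ), ∃ N, ∀ m ≥ N, ∀ k ≥ N, frechetRho q (u m) (u k) < ε) →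
    ∃ z : Z, Tendsto (fun k => frechetRho q (u k) z) atTop (𝓝 0)

lemma RhoComplete.exists_tendsto {Z : Type*} [AddCommGroup Z] [Module ℝ Z]
    {q : ℕ → Seminorm ℝ Z} (hq : RhoComplete q) {u : ℕ → Z}
    (hu : Tendsto (fun mk : ℕ × ℕ => frechetRho q (u mk.1) (u mk.2)) (atTop ×ˢ atTop) (𝓝 0)) :
    ∃ z : Z, Tendsto (fun k => frechetRho q (u k) z) atTop (𝓝 0) :=
  hq u fun _ hε => by
    have hsmall := hu.eventually_lt_const hε
    rw [prod_atTop_atTop_eq] at hsmall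
    exact eventually_atTop_prod_self'.1 hsmall

def RhoClosedGraph {X Y : Type*} [AddCommGroup X] [Module ℝ X] [AddCommGroup Y] [Module ℝ Y]
    (p : ℕ → Seminorm ℝ X) (q : ℕ → Seminorm ℝ Y) (F : X → Set Y) : Prop :=
  ∀ (u : ℕ → X) (w : ℕ → Y) (x : X) (y : Y), (∀ k, w k ∈ F (u k)) →
    Tendsto (fun k => frechetRho p (u k) x) atTop (𝓝 0) →
    Tendsto (fun k => frechetRho q (w k) y) atTop (𝓝 0) → y ∈ F x

structure Stage (X Y : Type*) where
  t : ℝ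
  u : X
  w : Y

structure Precedes {X Y : Type*} [AddCommGroup X] [Module ℝ X] [AddCommGroup Y] [Module ℝ Y]
    (p : ℕ → Seminorm ℝ X) (q : ℕ → Seminorm ℝ Y) (s : ℕ → ℝ) (v : Y) (ε : ℝ)
    (e e' : Stage X Y) : Prop where
  t_le : e.t ≤ e'.t
  seminorm_le : ∀ n, p n (e'.u - e.u) ≤ (e'.t - e.t) * s n
  frechetRho_le : frechetRho q e'.w (e.w + (e'.t - e.t) • v) ≤ ε * (e'.t - e.t)

structure Admissible {X Y : Type*} [AddCommGroup X] [Module ℝ X] [AddCommGroup Y] [Module ℝ Y]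
    (p : ℕ → Seminorm ℝ X) (q : ℕ → Seminorm ℝ Y) (s : ℕ → ℝ) (v : Y) (ε : ℝ)
    (F : X → Set Y) (x : X) (y : Y) (e : Stage X Y) : Prop where
  /-- i.e. `0 ≤ t`, `u ∈ t Πₛ(X)` and `ρ(w, y + t v) ≤ ε t` -/
  start_precedes : Precedes p q s v ε ⟨0, 0, y⟩ e
  t_le_one : e.t ≤ 1
  mem : e.w ∈ F (x + e.u)

section Precedes

variable {X Y : Type*} [AddCommGroup X] [Module ℝ X] [AddCommGroup Y] [Module ℝ Y]
  {p : ℕ → Seminorm ℝ X} {q : ℕ → Seminorm ℝ Y} {s : ℕ → ℝ} {v : Y} {ε : ℝ}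
  {e e' e'' : Stage X Y}

lemma Precedes.refl (e : Stage X Y) : Precedes p q s v ε e e :=
  ⟨le_rfl, fun n => by simp, by simp [frechetRho_self]⟩

lemma Precedes.trans (h : Precedes p q s v ε e e') (h' : Precedes p q s v ε e' e'') :
    Precedes p q s v ε e e'' := by
  refine ⟨h.t_le.trans h'.t_le, fun n => ?_, ?_⟩
  · calc p n (e''.u - e.u) ≤ p n (e''.u - e'.u) + p n (e'.u - e.u) := by
          simpa using map_add_le_add (p n) (e''.u - e'.u) (e'.u - e.u)
      _ ≤ (e''.t - e'.t) * s n + (e'.t - e.t) * s n :=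
          add_le_add (h'.seminorm_le n) (h.seminorm_le n)
      _ = (e''.t - e.t) * s n := by ring
  · have hshift : frechetRho q (e'.w + (e''.t - e'.t) • v) (e.w + (e''.t - e.t) • v)
        = frechetRho q e'.w (e.w + (e'.t - e.t) • v) :=
      frechetRho_congr q (by module)
    calc frechetRho q e''.w (e.w + (e''.t - e.t) • v)
        ≤ frechetRho q e''.w (e'.w + (e''.t - e'.t) • v)
          + frechetRho q (e'.w + (e''.t - e'.t) • v) (e.w + (e''.t - e.t) • v) :=
          frechetRho_triangle q _ _ _
      _ ≤ ε * (e''.t - e'.t) + ε * (e'.t - e.t) := by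
          rw [hshift]; exact add_le_add h'.frechetRho_le h.frechetRho_le
      _ = ε * (e''.t - e.t) := by ring

lemma Precedes.symm_of_t_le (h : Precedes p q s v ε e e') (ht : e'.t ≤ e.t) :
    Precedes p q s v ε e' e := by
  have heq : e'.t = e.t := le_antisymm ht h.t_le
  have hw := h.frechetRho_le
  rw [heq, sub_self, zero_smul, add_zero, mul_zero] at hw
  refine ⟨ht, fun n => ?_, ?_⟩
  · simpa [heq, map_sub_rev] using h.seminorm_le n
  · rw [heq, sub_self, zero_smul, add_zero, mul_zero, frechetRho_comm]
    exact hw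

lemma Precedes.seminorm_le_abs (h : Precedes p q s v ε e e') (n : ℕ) :
    p n (e'.u - e.u) ≤ |e'.t - e.t| * s n := by
  rw [abs_of_nonneg (sub_nonneg.2 h.t_le)]
  exact h.seminorm_le n

lemma Precedes.frechetRho_le_abs (h : Precedes p q s v ε e e') :
    frechetRho q e'.w e.w ≤ ε * |e'.t - e.t| + frechetRho q (|e'.t - e.t| • v) 0 := by
  rw [abs_of_nonneg (sub_nonneg.2 h.t_le)]
  have hshift : frechetRho q (e.w + (e'.t - e.t) • v) e.w = frechetRho q ((e'.t - e.t) • v) 0 :=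
    frechetRho_congr q (by abel)
  calc frechetRho q e'.w e.w
      ≤ frechetRho q e'.w (e.w + (e'.t - e.t) • v) + frechetRho q (e.w + (e'.t - e.t) • v) e.w :=
        frechetRho_triangle q _ _ _
    _ = frechetRho q e'.w (e.w + (e'.t - e.t) • v) + frechetRho q ((e'.t - e.t) • v) 0 := by
        rw [hshift]
    _ ≤ ε * (e'.t - e.t) + frechetRho q ((e'.t - e.t) • v) 0 := by
        gcongr; exact h.frechetRho_le

lemma IsChain.precedes_of_t_le {c : Set (Stage X Y)} (hc : IsChain (Precedes p q s v ε) c)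
    (he : e ∈ c) (he' : e' ∈ c) (ht : e.t ≤ e'.t) : Precedes p q s v ε e e' := by
  rcases eq_or_ne e e' with rfl | hne
  · exact Precedes.refl e
  · exact (hc he he' hne).elim id fun h => h.symm_of_t_le ht

lemma Admissible.seminorm_le {F : X → Set Y} {x : X} {y : Y}
    (he : Admissible p q s v ε F x y e) (n : ℕ) : p n e.u ≤ e.t * s n := by
  simpa using he.start_precedes.seminorm_le n

lemma Admissible.frechetRho_le {F : X → Set Y} {x : X} {y : Y}
    (he : Admissible p q s v ε F x y e) : frechetRho q e.w (y + e.t • v) ≤ ε * e.t := by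
  simpa using he.start_precedes.frechetRho_le

end Precedes

section Limits

variable {X Y : Type*} [AddCommGroup X] [Module ℝ X] [AddCommGroup Y] [Module ℝ Y]
  {p : ℕ → Seminorm ℝ X} {q : ℕ → Seminorm ℝ Y} {s : ℕ → ℝ} {v : Y} {ε : ℝ}
  {F : X → Set Y} {x : X} {y : Y} {E : ℕ → Stage X Y} {Λ : ℝ}

lemma tendsto_frechetRho_prod_of_precedes (ht : Tendsto (fun m => (E m).t) atTop (𝓝 Λ))
    (hE : ∀ i j, (E i).t ≤ (E j).t → Precedes p q s v ε (E i) (E j)) :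
    Tendsto (fun mk : ℕ × ℕ => frechetRho p (E mk.1).u (E mk.2).u) (atTop ×ˢ atTop) (𝓝 0) ∧
      Tendsto (fun mk : ℕ × ℕ => frechetRho q (E mk.1).w (E mk.2).w) (atTop ×ˢ atTop) (𝓝 0) := by
  have hδ : Tendsto (fun mk : ℕ × ℕ => (E mk.1).t - (E mk.2).t) (atTop ×ˢ atTop) (𝓝 0) := by
    simpa using (ht.comp tendsto_fst).sub (ht.comp tendsto_snd)
  have hpair : ∀ i j, (∀ n, p n ((E i).u - (E j).u) ≤ |(E i).t - (E j).t| * s n) ∧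
      frechetRho q (E i).w (E j).w
        ≤ ε * |(E i).t - (E j).t| + frechetRho q (|(E i).t - (E j).t| • v) 0 := by
    intro i j
    rcases le_total (E j).t (E i).t with h | h
    · exact ⟨(hE j i h).seminorm_le_abs, (hE j i h).frechetRho_le_abs⟩
    · have hij := hE i j h
      rw [abs_sub_comm, frechetRho_comm]
      exact ⟨fun n => by rw [map_sub_rev]; exact hij.seminorm_le_abs n, hij.frechetRho_le_abs⟩
  refine ⟨tendsto_frechetRho_of_seminorm_le p s hδ fun _ n => (hpair _ _).1 n, ?_⟩
  have hbound : Tendsto (fun mk : ℕ × ℕ => ε * |(E mk.1).t - (E mk.2).t|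
      + frechetRho q (|(E mk.1).t - (E mk.2).t| • v) 0) (atTop ×ˢ atTop) (𝓝 0) := by
    simpa using (hδ.abs.const_mul ε).add
      ((tendsto_frechetRho_smul q v).comp (by simpa using hδ.abs))
  exact squeeze_zero (fun _ => frechetRho_nonneg q _ _) (fun _ => (hpair _ _).2) hbound

lemma Precedes.of_tendsto {e : Stage X Y} {uLim : X} {wLim : Y}
    (ht : Tendsto (fun m => (E m).t) atTop (𝓝 Λ))
    (hu : Tendsto (fun m => frechetRho p (E m).u uLim) atTop (𝓝 0))
    (hw : Tendsto (fun m => frechetRho q (E m).w wLim) atTop (𝓝 0))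
    (hE : ∀ᶠ m in atTop, Precedes p q s v ε e (E m)) : Precedes p q s v ε e ⟨Λ, uLim, wLim⟩ := by
  refine ⟨ge_of_tendsto ht (hE.mono fun m hm => hm.t_le), fun n => ?_, ?_⟩
  · have hlim : Tendsto (fun m => p n ((E m).u - uLim) + ((E m).t - e.t) * s n) atTop
        (𝓝 ((Λ - e.t) * s n)) := by
      simpa using (tendsto_seminorm_of_tendsto_frechetRho p hu n).add
        ((ht.sub_const e.t).mul_const (s n))
    refine ge_of_tendsto hlim (hE.mono fun m hm => ?_)
    calc p n (uLim - e.u) ≤ p n (uLim - (E m).u) + p n ((E m).u - e.u) := by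
          simpa using map_add_le_add (p n) (uLim - (E m).u) ((E m).u - e.u)
      _ ≤ p n ((E m).u - uLim) + ((E m).t - e.t) * s n := by
          rw [map_sub_rev]; gcongr; exact hm.seminorm_le n
  · have hlim : Tendsto (fun m => frechetRho q (E m).w wLim + ε * ((E m).t - e.t)
        + frechetRho q (((E m).t - Λ) • v) 0) atTop (𝓝 (ε * (Λ - e.t))) := by
      simpa using (hw.add ((ht.sub_const e.t).const_mul ε)).add
        ((tendsto_frechetRho_smul q v).comp (tendsto_sub_nhds_zero_iff.2 ht))
    refine ge_of_tendsto hlim (hE.mono fun m hm => ?_)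
    have hshift : frechetRho q (e.w + ((E m).t - e.t) • v) (e.w + (Λ - e.t) • v)
        = frechetRho q (((E m).t - Λ) • v) 0 :=
      frechetRho_congr q (by module)
    calc frechetRho q wLim (e.w + (Λ - e.t) • v)
        ≤ frechetRho q wLim (E m).w + (frechetRho q (E m).w (e.w + ((E m).t - e.t) • v)
          + frechetRho q (e.w + ((E m).t - e.t) • v) (e.w + (Λ - e.t) • v)) :=
          (frechetRho_triangle q _ (E m).w _).trans (by gcongr; exact frechetRho_triangle q _ _ _)
      _ ≤ _ := by rw [frechetRho_comm q wLim, hshift]; linarith [hm.frechetRho_le]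

lemma exists_stage_limit (hX : RhoComplete p) (hY : RhoComplete q) (hF : RhoClosedGraph p q F)
    (ht : Tendsto (fun m => (E m).t) atTop (𝓝 Λ))
    (hE : ∀ i j, (E i).t ≤ (E j).t → Precedes p q s v ε (E i) (E j))
    (hmem : ∀ m, (E m).w ∈ F (x + (E m).u)) :
    ∃ ℓ : Stage X Y, ℓ.t = Λ ∧ ℓ.w ∈ F (x + ℓ.u) ∧
      ∀ e, (∀ᶠ m in atTop, Precedes p q s v ε e (E m)) → Precedes p q s v ε e ℓ := by
  obtain ⟨hcu, hcw⟩ := tendsto_frechetRho_prod_of_precedes ht hE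
  obtain ⟨uLim, hu⟩ := hX.exists_tendsto (u := fun m => (E m).u) hcu
  obtain ⟨wLim, hw⟩ := hY.exists_tendsto (u := fun m => (E m).w) hcw
  have hshift : ∀ m, frechetRho p (x + (E m).u) (x + uLim) = frechetRho p (E m).u uLim := fun m =>
    frechetRho_congr p (add_sub_add_left_eq_sub _ _ _)
  exact ⟨⟨Λ, uLim, wLim⟩, rfl, hF (fun m => x + (E m).u) (fun m => (E m).w) (x + uLim) wLim hmem
    (by simpa only [hshift] using hu) hw,
    fun e he => Precedes.of_tendsto ht hu hw he⟩

lemma exists_upper_bound_of_isChain (hX : RhoComplete p) (hY : RhoComplete q)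
    (hF : RhoClosedGraph p q F) (hyF : y ∈ F x) {c : Set (Stage X Y)}
    (hc : IsChain (Precedes p q s v ε) c) (hadm : ∀ e ∈ c, Admissible p q s v ε F x y e) :
    ∃ ub, Admissible p q s v ε F x y ub ∧ ∀ e ∈ c, Precedes p q s v ε e ub := by
  rcases c.eq_empty_or_nonempty with rfl | hne
  · exact ⟨⟨0, 0, y⟩, ⟨Precedes.refl _, zero_le_one, by simpa using hyF⟩, by simp⟩
  have hbdd : BddAbove (Stage.t '' c) := ⟨1, by rintro _ ⟨e, he, rfl⟩; exact (hadm e he).t_le_one⟩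
  set Λ := sSup (Stage.t '' c)
  have hle : ∀ e ∈ c, e.t ≤ Λ := fun e he => le_csSup hbdd (mem_image_of_mem _ he)
  by_cases hattained : ∃ e₀ ∈ c, e₀.t = Λ
  · obtain ⟨e₀, he₀, hΛ⟩ := hattained
    exact ⟨e₀, hadm e₀ he₀, fun e he => hc.precedes_of_t_le he he₀ (hΛ ▸ hle e he)⟩
  push Not at hattained
  have happrox : ∀ j : ℕ, ∃ e ∈ c, Λ - 1 / (j + 1) < e.t := fun j => by
    obtain ⟨_, ⟨e, he, rfl⟩, hlt⟩ := exists_lt_of_lt_csSup (hne.image _)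
      (sub_lt_self Λ (by positivity : (0 : ℝ) < 1 / (j + 1)))
    exact ⟨e, he, hlt⟩
  choose E hEc hEt using happrox
  have ht : Tendsto (fun m => (E m).t) atTop (𝓝 Λ) :=
    tendsto_of_tendsto_of_tendsto_of_le_of_le
      (by simpa using tendsto_const_nhds.sub (tendsto_one_div_add_atTop_nhds_zero_nat (𝕜 := ℝ)))
      tendsto_const_nhds (fun m => (hEt m).le) (fun m => hle _ (hEc m))
  obtain ⟨ℓ, hℓt, hℓF, hℓ⟩ := exists_stage_limit hX hY hF ht
    (fun i j => hc.precedes_of_t_le (hEc i) (hEc j)) (fun m => (hadm _ (hEc m)).mem)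
  refine ⟨ℓ, ⟨hℓ _ (Eventually.of_forall fun m => (hadm _ (hEc m)).start_precedes), ?_, hℓF⟩,
    fun e he => hℓ e ?_⟩
  · rw [hℓt]
    exact csSup_le (hne.image _) (by rintro _ ⟨e, he, rfl⟩; exact (hadm e he).t_le_one)
  · filter_upwards [ht.eventually_const_lt ((hle e he).lt_of_ne (hattained e he))] with m hm
    exact hc.precedes_of_t_le he (hEc m) hm.le

lemma exists_maximal_admissible (hX : RhoComplete p) (hY : RhoComplete q)
    (hF : RhoClosedGraph p q F) (hyF : y ∈ F x) :
    ∃ m, Admissible p q s v ε F x y m ∧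
      ∀ e, Admissible p q s v ε F x y e → Precedes p q s v ε m e → e.t ≤ m.t := by
  obtain ⟨m, hm⟩ := exists_maximal_of_chains_bounded
    (r := fun a b : {e // Admissible p q s v ε F x y e} => Precedes p q s v ε a.1 b.1)
    (fun c hc => by
      obtain ⟨ub, hub, hle⟩ := exists_upper_bound_of_isChain hX hY hF hyF
        (hc.image_of_map_rel _ _ Subtype.val fun _ _ h => h) (by rintro _ ⟨e, -, rfl⟩; exact e.2)
      exact ⟨⟨ub, hub⟩, fun a ha => hle _ (mem_image_of_mem _ ha)⟩)
    (fun hab hbc => hab.trans hbc)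
  exact ⟨m.1, m.2, fun e he hme => (hm ⟨e, he⟩ hme).t_le⟩

lemma Admissible.exists_precedes_of_t_lt_one {e : Stage X Y}
    (he : Admissible p q s v ε F x y e) (ht : e.t < 1) (hε : 0 < ε)
    (hdir : (1 - e.t) • v ∈ contVar q F (x + e.u) e.w (PiS p fun n => (1 - e.t) * s n)) :
    ∃ e', Admissible p q s v ε F x y e' ∧ Precedes p q s v ε e e' ∧ e.t < e'.t := by
  obtain ⟨τ, a, z, hτ, hτ0, ha, hz, hratio⟩ := hdir
  have hgap : 0 < 1 - e.t := sub_pos.2 ht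
  obtain ⟨k, hk, hk1⟩ := ((hratio.eventually_lt_const (mul_pos hε hgap)).and
    (hτ0.eventually_lt_const one_pos)).exists
  have hτk := hτ k
  have hstep : Precedes p q s v ε e ⟨e.t + τ k * (1 - e.t), e.u + τ k • a k, z k⟩ := by
    refine ⟨by simp only; nlinarith, fun n => ?_, ?_⟩
    · simp only [add_sub_cancel_left, map_smul_eq_mul, Real.norm_eq_abs, abs_of_pos hτk]
      calc τ k * p n (a k) ≤ τ k * ((1 - e.t) * s n) := mul_le_mul_of_nonneg_left (ha k n) hτk.le
        _ = τ k * (1 - e.t) * s n := by ring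
    · simp only [add_sub_cancel_left]
      have := (div_lt_iff₀ hτk).1 hk
      rw [smul_smul] at this
      linarith
  exact ⟨_, ⟨he.start_precedes.trans hstep, by simp only; nlinarith,
    by simpa [add_assoc] using hz k⟩, hstep, by simp only; nlinarith⟩

end Limits

theorem stmt13_general {X Y : Type*} [AddCommGroup X] [Module ℝ X] [AddCommGroup Y] [Module ℝ Y]
    (p : ℕ → Seminorm ℝ X) (q : ℕ → Seminorm ℝ Y)
    (hcompX : ∀ u : ℕ → X,
      (∀ ε > (0 : ℝ), ∃ N, ∀ m ≥ N, ∀ k ≥ N, frechetRho p (u m) (u k) < ε) →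
      ∃ x : X, Tendsto (fun k => frechetRho p (u k) x) atTop (𝓝 0))
    (hcompY : ∀ u : ℕ → Y,
      (∀ ε > (0 : ℝ), ∃ N, ∀ m ≥ N, ∀ k ≥ N, frechetRho q (u m) (u k) < ε) →
      ∃ y : Y, Tendsto (fun k => frechetRho q (u k) y) atTop (𝓝 0))
    (F : X → Set Y)
    (hgraph : ∀ (u : ℕ → X) (w : ℕ → Y) (x : X) (y : Y), (∀ k, w k ∈ F (u k)) →
      Tendsto (fun k => frechetRho p (u k) x) atTop (𝓝 0) →
      Tendsto (fun k => frechetRho q (w k) y) atTop (𝓝 0) → y ∈ F x)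
    (U : Set X) (V : Set Y) (hV : RhoOpen q V) (hVconv : Convex ℝ V)
    (κ : ℝ)
    (hD : ∀ x y, y ∈ F x → x ∈ U → y ∈ V → ∀ s : ℕ → ℝ, (∀ n, 0 ≤ s n) →
      PiS q (fun n => κ * s n) ⊆ contVar q F x y (PiS p s)) :
    ∀ x y, y ∈ F x → x ∈ U → y ∈ V → ∀ s : ℕ → ℝ, (∀ n, 0 ≤ s n) →
      (∀ u ∈ PiS p s, x + u ∈ U) →
      ∀ v ∈ PiS q (fun n => κ * s n), y + v ∈ V →
        y + v ∈ rhoClosure q (⋃ u ∈ PiS p s, F (x + u)) := by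
  intro x y hyF _ hyV s hs hUx v hv hyvV ε hε
  obtain ⟨r, hr, hrV⟩ := hV.exists_tube_subset fun μ hμ => by
    simpa using hVconv.add_smul_sub_mem hyV hyvV hμ
  set δ := min ε r / 2 with hδ_def
  have hδ : 0 < δ := by positivity
  have hδr : δ < r := by linarith [min_le_right ε r]
  obtain ⟨m, hm, hmax⟩ :=
    exists_maximal_admissible (s := s) (v := v) (ε := δ) hcompX hcompY hgraph hyF
  have hm1 : m.t = 1 := by
    by_contra hne
    have hlt : m.t < 1 := hm.t_le_one.lt_of_ne hne
    have hgap : 0 ≤ 1 - m.t := sub_nonneg.2 hlt.le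
    have hwV : m.w ∈ V := hrV m.t ⟨hm.start_precedes.t_le, hm.t_le_one⟩ m.w <|
      hm.frechetRho_le.trans_lt ((mul_le_of_le_one_right hδ.le hm.t_le_one).trans_lt hδr)
    have huU : x + m.u ∈ U :=
      hUx m.u fun n => (hm.seminorm_le n).trans (mul_le_of_le_one_left (hs n) hm.t_le_one)
    have hdir := hD _ _ hm.mem huU hwV _ (fun n => mul_nonneg hgap (hs n))
      (fun n => by simpa only [mul_left_comm] using smul_mem_PiS hgap hv n)
    obtain ⟨e, he, hme, hlt'⟩ := hm.exists_precedes_of_t_lt_one hlt hδ hdir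
    exact (hmax e he hme).not_gt hlt'
  refine ⟨m.w, mem_iUnion₂.2 ⟨m.u, fun n => by simpa [hm1] using hm.seminorm_le n, hm.mem⟩, ?_⟩
  have hmw := hm.frechetRho_le
  rw [hm1, one_smul, mul_one] at hmw
  linarith [min_le_left ε r]

/-- if `D′F(x,y)(Πₛ(X)) ⊇ κ·Πₛ(Y)` for all `(x,y) ∈ (U × V) ∩ graph F`
and all `s ∈ ℝ₊^∞` (`U` open, `V` open and convex), then `F` is weakly Π-surjective on
`(U, V)` with constant `κ`: whenever `(x,y) ∈ (U × V) ∩ graph F` and `x + Πₛ(X) ⊆ U`,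
`cl F(x + Πₛ(X)) ⊇ (y + κ·Πₛ(Y)) ∩ V`. -/
theorem stmt13 {X Y : Type*} [AddCommGroup X] [Module ℝ X] [AddCommGroup Y] [Module ℝ Y]
    (p : ℕ → Seminorm ℝ X) (q : ℕ → Seminorm ℝ Y)
    (hsepX : ∀ x : X, (∀ n, p n x = 0) → x = 0)
    (hsepY : ∀ y : Y, (∀ n, q n y = 0) → y = 0)
    (hcompX : ∀ u : ℕ → X,
      (∀ ε > (0 : ℝ), ∃ N, ∀ m ≥ N, ∀ k ≥ N, frechetRho p (u m) (u k) < ε) →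
      ∃ x : X, Tendsto (fun k => frechetRho p (u k) x) atTop (𝓝 0))
    (hcompY : ∀ u : ℕ → Y,
      (∀ ε > (0 : ℝ), ∃ N, ∀ m ≥ N, ∀ k ≥ N, frechetRho q (u m) (u k) < ε) →
      ∃ y : Y, Tendsto (fun k => frechetRho q (u k) y) atTop (𝓝 0))
    (F : X → Set Y)
    (hgraph : ∀ (u : ℕ → X) (w : ℕ → Y) (x : X) (y : Y), (∀ k, w k ∈ F (u k)) →
      Tendsto (fun k => frechetRho p (u k) x) atTop (𝓝 0) →
      Tendsto (fun k => frechetRho q (w k) y) atTop (𝓝 0) → y ∈ F x)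
    (U : Set X) (V : Set Y) (hU : RhoOpen p U) (hV : RhoOpen q V) (hVconv : Convex ℝ V)
    (κ : ℝ) (hκ : 0 < κ)
    (hD : ∀ x y, y ∈ F x → x ∈ U → y ∈ V → ∀ s : ℕ → ℝ, (∀ n, 0 ≤ s n) →
      PiS q (fun n => κ * s n) ⊆ contVar q F x y (PiS p s)) :
    ∀ x y, y ∈ F x → x ∈ U → y ∈ V → ∀ s : ℕ → ℝ, (∀ n, 0 ≤ s n) →
      (∀ u ∈ PiS p s, x + u ∈ U) →
      ∀ v ∈ PiS q (fun n => κ * s n), y + v ∈ V →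
        y + v ∈ rhoClosure q (⋃ u ∈ PiS p s, F (x + u)) :=
  stmt13_general p q hcompX hcompY F hgraph U V hV hVconv κ hD
end

section
/- Let (X, ‖·‖ₙ) and (Y, |·|ₙ) be Fréchet spaces with the standard metrics ρ_X, ρ_Y, and let U ⊆ X, V ⊆ Y be nonempty open sets. If F : X ⇉ Y has closed graph and is weakly Π-surjective on (U, V), then there exists θ > 0 such that F(B_{ρ_X}(x, r)) ⊇ B_{ρ_Y}(y, θ·r) ∩ V for all (x,y) ∈ graph(F) ∩ (U × V) and all r with 0 < r < dist(x, X \ U). That is, F is restrictedly open at linear rate on (U, V). -/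
open Filter Topology Set Pointwise

private lemma phi_mono {a b : ℝ} (ha : 0 ≤ a) (h : a ≤ b) : a / (1 + a) ≤ b / (1 + b) := by
  have h1 : (0:ℝ) < 1 + a := by linarith
  have h2 : (0:ℝ) < 1 + b := by linarith
  rw [div_le_div_iff₀ h1 h2]; nlinarith

private lemma phi_add {a b : ℝ} (ha : 0 ≤ a) (hb : 0 ≤ b) :
    (a + b) / (1 + (a + b)) ≤ a / (1 + a) + b / (1 + b) := by
  have h1 : (0:ℝ) < 1 + a := by linarith
  have h2 : (0:ℝ) < 1 + b := by linarith
  have h3 : (0:ℝ) < 1 + (a + b) := by linarith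
  rw [div_add_div _ _ h1.ne' h2.ne', div_le_div_iff₀ h3 (mul_pos h1 h2)]
  nlinarith [mul_nonneg ha hb, mul_nonneg (mul_nonneg ha hb) (add_nonneg ha hb)]

private lemma phi_scale {a κ κ' : ℝ} (ha : 0 ≤ a) (hκ : 0 < κ) (hκ'0 : 0 < κ')
    (h1 : κ' ≤ κ) (h2 : κ' ≤ 1) :
    a / κ / (1 + a / κ) ≤ a / (1 + a) / κ' := by
  have e1 : a / κ / (1 + a / κ) = a / (κ + a) := by
    rw [div_div]
    congr 1
    field_simp
  have e2 : a / (1 + a) / κ' = a / ((1 + a) * κ') := by rw [div_div]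
  rw [e1, e2, div_le_div_iff₀ (by positivity) (by positivity)]
  nlinarith [mul_nonneg ha ha, mul_nonneg ha (sub_nonneg.mpr h1),
    mul_nonneg (mul_nonneg ha ha) (sub_nonneg.mpr h2)]

section
variable {X : Type*} [AddCommGroup X] [Module ℝ X] (p : ℕ → Seminorm ℝ X)

private lemma frechetRho_term_nonneg (x y : X) (n : ℕ) :
    0 ≤ (2:ℝ)⁻¹ ^ n * p n (x - y) / (1 + p n (x - y)) := by
  have := apply_nonneg (p n) (x - y); positivity

private lemma frechetRho_bdd (x y : X) :
    BddAbove (Set.range fun n => (2:ℝ)⁻¹ ^ n * p n (x - y) / (1 + p n (x - y))) := by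
  refine ⟨1, ?_⟩
  rintro _ ⟨n, rfl⟩
  have h0 := apply_nonneg (p n) (x - y)
  have hc1 : (2:ℝ)⁻¹ ^ n ≤ 1 := pow_le_one₀ (by norm_num) (by norm_num)
  have hd : p n (x - y) / (1 + p n (x - y)) ≤ 1 := by
    rw [div_le_one (by linarith)]; linarith
  calc (2:ℝ)⁻¹ ^ n * p n (x - y) / (1 + p n (x - y))
      = (2:ℝ)⁻¹ ^ n * (p n (x - y) / (1 + p n (x - y))) := mul_div_assoc _ _ _
    _ ≤ 1 * 1 := mul_le_mul hc1 hd (by positivity) (by norm_num)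
    _ = 1 := by norm_num

private lemma frechetRho_nonneg_s14 (x y : X) : 0 ≤ frechetRho p x y :=
  Real.iSup_nonneg (frechetRho_term_nonneg p x y)

private lemma frechetRho_self_s14 (x : X) : frechetRho p x x = 0 := by
  simp [frechetRho]

private lemma frechetRho_term_le (x y : X) (n : ℕ) :
    (2:ℝ)⁻¹ ^ n * p n (x - y) / (1 + p n (x - y)) ≤ frechetRho p x y :=
  le_ciSup (frechetRho_bdd p x y) n

private lemma frechetRho_symm (x y : X) : frechetRho p x y = frechetRho p y x := by
  unfold frechetRho
  congr 1
  ext n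
  rw [map_sub_rev]

private lemma frechetRho_triangle_s14 (x y z : X) :
    frechetRho p x z ≤ frechetRho p x y + frechetRho p y z := by
  apply ciSup_le
  intro n
  have ha := apply_nonneg (p n) (x - y)
  have hb := apply_nonneg (p n) (y - z)
  have hc := apply_nonneg (p n) (x - z)
  have hab : p n (x - z) ≤ p n (x - y) + p n (y - z) := by
    have := map_add_le_add (p n) (x - y) (y - z)
    rwa [sub_add_sub_cancel] at this
  have hc0 : (0:ℝ) ≤ (2:ℝ)⁻¹ ^ n := by positivity
  have key : p n (x - z) / (1 + p n (x - z)) ≤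
      p n (x - y) / (1 + p n (x - y)) + p n (y - z) / (1 + p n (y - z)) :=
    le_trans (phi_mono hc hab) (phi_add ha hb)
  calc (2:ℝ)⁻¹ ^ n * p n (x - z) / (1 + p n (x - z))
      = (2:ℝ)⁻¹ ^ n * (p n (x - z) / (1 + p n (x - z))) := mul_div_assoc _ _ _
    _ ≤ (2:ℝ)⁻¹ ^ n * (p n (x - y) / (1 + p n (x - y)) + p n (y - z) / (1 + p n (y - z))) :=
        mul_le_mul_of_nonneg_left key hc0
    _ = (2:ℝ)⁻¹ ^ n * p n (x - y) / (1 + p n (x - y)) +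
        (2:ℝ)⁻¹ ^ n * p n (y - z) / (1 + p n (y - z)) := by ring
    _ ≤ frechetRho p x y + frechetRho p y z :=
        add_le_add (frechetRho_term_le p x y n) (frechetRho_term_le p y z n)

end

/-- if `F` (closed graph) is weakly Π-surjective on nonempty open `(U, V)`,
then there is `θ > 0` with `F(B_{ρ_X}(x, r)) ⊇ B_{ρ_Y}(y, θr) ∩ V` for all
`(x,y) ∈ graph F ∩ (U × V)` and all `0 < r < dist(x, X \ U)`. -/
theorem stmt14 {X Y : Type*} [AddCommGroup X] [Module ℝ X] [AddCommGroup Y] [Module ℝ Y]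
    (p : ℕ → Seminorm ℝ X) (q : ℕ → Seminorm ℝ Y)
    (hsepX : ∀ x : X, (∀ n, p n x = 0) → x = 0)
    (hsepY : ∀ y : Y, (∀ n, q n y = 0) → y = 0)
    (hcompX : ∀ u : ℕ → X,
      (∀ ε > (0 : ℝ), ∃ N, ∀ m ≥ N, ∀ k ≥ N, frechetRho p (u m) (u k) < ε) →
      ∃ x : X, Tendsto (fun k => frechetRho p (u k) x) atTop (𝓝 0))
    (hcompY : ∀ u : ℕ → Y,
      (∀ ε > (0 : ℝ), ∃ N, ∀ m ≥ N, ∀ k ≥ N, frechetRho q (u m) (u k) < ε) →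
      ∃ y : Y, Tendsto (fun k => frechetRho q (u k) y) atTop (𝓝 0))
    (F : X → Set Y)
    (hgraph : ∀ (u : ℕ → X) (w : ℕ → Y) (x : X) (y : Y), (∀ k, w k ∈ F (u k)) →
      Tendsto (fun k => frechetRho p (u k) x) atTop (𝓝 0) →
      Tendsto (fun k => frechetRho q (w k) y) atTop (𝓝 0) → y ∈ F x)
    (U : Set X) (V : Set Y) (hU : RhoOpen p U) (hV : RhoOpen q V)
    (hUne : U.Nonempty) (hVne : V.Nonempty)
    -- weak Π-surjectivity on (U, V) with constant κ:
    (κ : ℝ) (hκ : 0 < κ)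
    (hws : ∀ x y, y ∈ F x → x ∈ U → y ∈ V → ∀ s : ℕ → ℝ, (∀ n, 0 ≤ s n) →
      (∀ u ∈ PiS p s, x + u ∈ U) →
      ∀ v ∈ PiS q (fun n => κ * s n), y + v ∈ V →
        y + v ∈ rhoClosure q (⋃ u ∈ PiS p s, F (x + u))) :
    ∃ θ > (0 : ℝ), ∀ x y, y ∈ F x → x ∈ U → y ∈ V → ∀ r : ℝ, 0 < r →
      ENNReal.ofReal r < (⨅ z ∈ Uᶜ, ENNReal.ofReal (frechetRho p x z)) →
      ∀ y' : Y, frechetRho q y y' ≤ θ * r → y' ∈ V →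
        ∃ x' : X, frechetRho p x x' ≤ r ∧ y' ∈ F x' := by
  set κ' := min κ 1 with hκ'def
  have hκ'pos : 0 < κ' := lt_min hκ one_pos
  have hκ'le1 : κ' ≤ 1 := min_le_right _ _
  have hκ'leκ : κ' ≤ κ := min_le_left _ _
  refine ⟨κ' / 4, by positivity, ?_⟩
  intro x y hyF hxU hyV r hr hrdist y' hy'near hy'V
  have hUin : ∀ z, frechetRho p x z ≤ r → z ∈ U := by
    intro z hz
    by_contra hcon
    have h1 : (⨅ z ∈ Uᶜ, ENNReal.ofReal (frechetRho p x z)) ≤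
        ENNReal.ofReal (frechetRho p x z) := iInf₂_le z hcon
    have h2 : ENNReal.ofReal r < ENNReal.ofReal (frechetRho p x z) := lt_of_lt_of_le hrdist h1
    have h3 : r < frechetRho p x z := (ENNReal.ofReal_lt_ofReal_iff_of_nonneg hr.le).mp h2
    linarith
  obtain ⟨εV, hεV, hεVball⟩ := hV y' hy'V
  -- the inductive step
  have key : ∀ (k : ℕ) (a : X) (b : Y), b ∈ F a → a ∈ U → b ∈ V →
      frechetRho p x a ≤ r / 2 * (1 - (2:ℝ)⁻¹ ^ k) →
      frechetRho q b y' ≤ κ' * r / 4 * (2:ℝ)⁻¹ ^ k →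
      ∃ (a' : X) (b' : Y), b' ∈ F a' ∧ a' ∈ U ∧ b' ∈ V ∧
        frechetRho p x a' ≤ r / 2 * (1 - (2:ℝ)⁻¹ ^ (k + 1)) ∧
        frechetRho q b' y' ≤ κ' * r / 4 * (2:ℝ)⁻¹ ^ (k + 1) ∧
        frechetRho p a a' ≤ r / 4 * (2:ℝ)⁻¹ ^ k := by
    intro k a b hbF haU hbV hxa hby'
    have hck0 : (0:ℝ) ≤ (2:ℝ)⁻¹ ^ k := by positivity
    have hck1 : (2:ℝ)⁻¹ ^ k ≤ 1 := pow_le_one₀ (by norm_num) (by norm_num)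
    set s : ℕ → ℝ := fun n => q n (y' - b) / κ with hsdef
    have hs : ∀ n, 0 ≤ s n := fun n => div_nonneg (apply_nonneg _ _) hκ.le
    have hball : ∀ u ∈ PiS p s, frechetRho p a (a + u) ≤ frechetRho q b y' / κ' := by
      intro u hu
      apply ciSup_le
      intro n
      have hsub : a - (a + u) = -u := by abel
      rw [hsub, map_neg_eq_map]
      have hpu := apply_nonneg (p n) u
      have han := apply_nonneg (q n) (y' - b)
      have hc0 : (0:ℝ) ≤ (2:ℝ)⁻¹ ^ n := by positivity
      calc (2:ℝ)⁻¹ ^ n * p n u / (1 + p n u)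
          = (2:ℝ)⁻¹ ^ n * (p n u / (1 + p n u)) := mul_div_assoc _ _ _
        _ ≤ (2:ℝ)⁻¹ ^ n * (s n / (1 + s n)) :=
            mul_le_mul_of_nonneg_left (phi_mono hpu (hu n)) hc0
        _ ≤ (2:ℝ)⁻¹ ^ n * ((q n (y' - b) / (1 + q n (y' - b))) / κ') :=
            mul_le_mul_of_nonneg_left (phi_scale han hκ hκ'pos hκ'leκ hκ'le1) hc0
        _ = ((2:ℝ)⁻¹ ^ n * q n (y' - b) / (1 + q n (y' - b))) / κ' := by ring
        _ = ((2:ℝ)⁻¹ ^ n * q n (b - y') / (1 + q n (b - y'))) / κ' := by rw [map_sub_rev]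
        _ ≤ frechetRho q b y' / κ' := by
            gcongr
            exact frechetRho_term_le q b y' n
    have hδ : frechetRho q b y' / κ' ≤ r / 4 * (2:ℝ)⁻¹ ^ k := by
      rw [div_le_iff₀ hκ'pos]
      calc frechetRho q b y' ≤ κ' * r / 4 * (2:ℝ)⁻¹ ^ k := hby'
        _ = r / 4 * (2:ℝ)⁻¹ ^ k * κ' := by ring
    have hUsub : ∀ u ∈ PiS p s, a + u ∈ U := by
      intro u hu
      apply hUin
      have h1 := frechetRho_triangle_s14 p x a (a + u)
      have h2 := le_trans (hball u hu) hδ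
      nlinarith [mul_nonneg hr.le hck0]
    have hv : (y' - b) ∈ PiS q (fun n => κ * s n) := by
      intro n
      show q n (y' - b) ≤ κ * s n
      simp only [hsdef]
      rw [mul_div_cancel₀ _ hκ.ne']
    have heq : b + (y' - b) = y' := by abel
    have hclose := hws a b hbF haU hbV s hs hUsub (y' - b) hv (by rwa [heq])
    rw [heq] at hclose
    set ε := min εV (κ' * r / 4 * (2:ℝ)⁻¹ ^ (k + 1)) with hεdef
    have hεpos : 0 < ε := lt_min hεV (by positivity)
    obtain ⟨z, hzmem, hz⟩ := hclose ε hεpos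
    obtain ⟨u, hu, hzF⟩ := Set.mem_iUnion₂.mp hzmem
    have hpow : (2:ℝ)⁻¹ ^ (k + 1) = (2:ℝ)⁻¹ ^ k * 2⁻¹ := pow_succ _ _
    refine ⟨a + u, z, hzF, hUsub u hu, ?_, ?_, ?_, le_trans (hball u hu) hδ⟩
    · apply hεVball
      rw [frechetRho_symm]
      exact lt_of_lt_of_le hz (min_le_left _ _)
    · have h1 := frechetRho_triangle_s14 p x a (a + u)
      have h2 := le_trans (hball u hu) hδ
      rw [hpow]
      linarith
    · exact le_of_lt (lt_of_lt_of_le hz (min_le_right _ _))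
  choose! f g hfg using key
  obtain ⟨seq, hseq0, hseqS⟩ : ∃ seq : ℕ → X × Y, seq 0 = (x, y) ∧
      ∀ k, seq (k + 1) = (f k (seq k).1 (seq k).2, g k (seq k).1 (seq k).2) :=
    ⟨fun k => Nat.rec (x, y) (fun n pr => (f n pr.1 pr.2, g n pr.1 pr.2)) k, rfl, fun _ => rfl⟩
  have hP : ∀ k, (seq k).2 ∈ F (seq k).1 ∧ (seq k).1 ∈ U ∧ (seq k).2 ∈ V ∧
      frechetRho p x (seq k).1 ≤ r / 2 * (1 - (2:ℝ)⁻¹ ^ k) ∧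
      frechetRho q (seq k).2 y' ≤ κ' * r / 4 * (2:ℝ)⁻¹ ^ k := by
    intro k
    induction k with
    | zero =>
      rw [hseq0]
      refine ⟨hyF, hxU, hyV, ?_, ?_⟩
      · simp [frechetRho_self_s14]
      · calc frechetRho q y y' ≤ κ' / 4 * r := hy'near
          _ = κ' * r / 4 * (2:ℝ)⁻¹ ^ 0 := by ring
    | succ k ih =>
      obtain ⟨h1, h2, h3, h4, h5⟩ := ih
      have := hfg k (seq k).1 (seq k).2 h1 h2 h3 h4 h5
      rw [hseqS k]
      exact ⟨this.1, this.2.1, this.2.2.1, this.2.2.2.1, this.2.2.2.2.1⟩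
  have hcons : ∀ k, frechetRho p (seq k).1 (seq (k + 1)).1 ≤ r / 4 * (2:ℝ)⁻¹ ^ k := by
    intro k
    obtain ⟨h1, h2, h3, h4, h5⟩ := hP k
    have := hfg k (seq k).1 (seq k).2 h1 h2 h3 h4 h5
    rw [hseqS k]
    exact this.2.2.2.2.2
  have hchain : ∀ m i, frechetRho p (seq m).1 (seq (m + i)).1 ≤
      r / 2 * ((2:ℝ)⁻¹ ^ m - (2:ℝ)⁻¹ ^ (m + i)) := by
    intro m i
    induction i with
    | zero => simp [frechetRho_self_s14]
    | succ i ih =>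
      have h1 := frechetRho_triangle_s14 p (seq m).1 (seq (m + i)).1 (seq (m + i + 1)).1
      have h2 := hcons (m + i)
      have hpow : (2:ℝ)⁻¹ ^ (m + i + 1) = (2:ℝ)⁻¹ ^ (m + i) * 2⁻¹ := pow_succ _ _
      have hidx : m + (i + 1) = m + i + 1 := by omega
      rw [hidx, hpow]
      linarith
  have hto0 : Tendsto (fun k => (2:ℝ)⁻¹ ^ k) atTop (𝓝 0) :=
    tendsto_pow_atTop_nhds_zero_of_lt_one (by norm_num) (by norm_num)
  have hcauchy : ∀ ε > (0:ℝ), ∃ N, ∀ m ≥ N, ∀ k ≥ N,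
      frechetRho p ((fun k => (seq k).1) m) ((fun k => (seq k).1) k) < ε := by
    intro ε hε
    obtain ⟨N, hN⟩ : ∃ N, r * (2:ℝ)⁻¹ ^ N < ε := by
      have h : Tendsto (fun k => r * (2:ℝ)⁻¹ ^ k) atTop (𝓝 0) := by
        simpa using hto0.const_mul r
      exact (h.eventually_lt_const hε).exists
    refine ⟨N, ?_⟩
    intro m hm k hk
    have hNm : frechetRho p (seq N).1 (seq m).1 ≤ r / 2 * (2:ℝ)⁻¹ ^ N := by
      have h := hchain N (m - N)
      have hidx : N + (m - N) = m := by omega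
      rw [hidx] at h
      have : (0:ℝ) ≤ (2:ℝ)⁻¹ ^ m := by positivity
      nlinarith [hr.le]
    have hNk : frechetRho p (seq N).1 (seq k).1 ≤ r / 2 * (2:ℝ)⁻¹ ^ N := by
      have h := hchain N (k - N)
      have hidx : N + (k - N) = k := by omega
      rw [hidx] at h
      have : (0:ℝ) ≤ (2:ℝ)⁻¹ ^ k := by positivity
      nlinarith [hr.le]
    have htri := frechetRho_triangle_s14 p (seq m).1 (seq N).1 (seq k).1
    rw [frechetRho_symm p (seq m).1 (seq N).1] at htri
    show frechetRho p (seq m).1 (seq k).1 < ε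
    linarith
  obtain ⟨x', hx'⟩ := hcompX (fun k => (seq k).1) hcauchy
  have hxk_half : ∀ k, frechetRho p x (seq k).1 ≤ r / 2 := by
    intro k
    have h := (hP k).2.2.2.1
    have h0 : (0:ℝ) ≤ (2:ℝ)⁻¹ ^ k := by positivity
    nlinarith [hr.le]
  have hfinal : frechetRho p x x' ≤ r := by
    have h1 : ∀ k, frechetRho p x x' - r / 2 ≤ frechetRho p (seq k).1 x' := by
      intro k
      have := frechetRho_triangle_s14 p x (seq k).1 x'
      linarith [hxk_half k]
    have h2 := ge_of_tendsto' hx' h1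
    linarith
  have hyto : Tendsto (fun k => frechetRho q (seq k).2 y') atTop (𝓝 0) := by
    apply squeeze_zero (fun k => frechetRho_nonneg_s14 q _ _) (fun k => (hP k).2.2.2.2)
    have := hto0.const_mul (κ' * r / 4)
    simpa using this
  exact ⟨x', hfinal, hgraph (fun k => (seq k).1) (fun k => (seq k).2) x' y'
    (fun k => (hP k).1) hx' hyto⟩
end
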